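/- Let S be a real m×n matrix with full column rank and let W be an m×m positive definite real matrix. Then the matrix S (SᵀS)⁻¹ Sᵀ W S (SᵀS)⁻¹ Sᵀ − S (Sᵀ W⁻¹ S)⁻¹ Sᵀ is positive semidefinite. -/

import Mathlib

open Matrix

/-- Auxiliary: conjugation of a positive definite matrix by an injective rectangular
matrix is positive definite. -/
lemma posDef_conj_of_injective {m n : ℕ} (S : Matrix (Fin m) (Fin n) ℝ)
    (hS : Function.Injective S.mulVec) {A : Matrix (Fin m) (Fin m) ℝ} (hA : A.PosDef) :
    (Sᵀ * A * S).PosDef := by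
  refine Matrix.PosDef.of_dotProduct_mulVec_pos ?_ (fun x hx => ?_)
  · have hAH : Aᴴ = A := hA.isHermitian
    have hAt : Aᵀ = A := by rw [← Matrix.conjTranspose_eq_transpose_of_trivial, hAH]
    simp [Matrix.IsHermitian, Matrix.conjTranspose_mul, hAH, hAt, Matrix.mul_assoc]
  · have hSx : S *ᵥ x ≠ 0 := by
      intro h
      exact hx (hS (by simpa using h))
    have := hA.dotProduct_mulVec_pos hSx
    simpa [star_trivial, ← Matrix.mulVec_mulVec, Matrix.dotProduct_mulVec,
      Matrix.vecMul_transpose, Matrix.mul_assoc] using this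

/-- For `S` of full column rank and `W` positive definite, the difference
between the OLS and MinT reconciled forecast error covariance matrices is positive
semidefinite. -/
theorem ols_sub_mint_posSemidef {m n : ℕ}
    (S : Matrix (Fin m) (Fin n) ℝ) (hS : Function.Injective S.mulVec)
    (W : Matrix (Fin m) (Fin m) ℝ) (hW : W.PosDef) :
    (S * (Sᵀ * S)⁻¹ * Sᵀ * W * S * (Sᵀ * S)⁻¹ * Sᵀ
      - S * (Sᵀ * W⁻¹ * S)⁻¹ * Sᵀ).PosSemidef := by
  have hWinv : (W⁻¹).PosDef := hW.inv
  -- Sᵀ S is positive definite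
  have hSS : (Sᵀ * S).PosDef := by
    have := posDef_conj_of_injective S hS (Matrix.PosDef.one (n := Fin m))
    simpa using this
  -- Sᵀ W⁻¹ S is positive definite
  have hKpd : (Sᵀ * W⁻¹ * S).PosDef := posDef_conj_of_injective S hS hWinv
  set K : Matrix (Fin n) (Fin n) ℝ := (Sᵀ * W⁻¹ * S)⁻¹ with hKdef
  -- cancellation facts
  have hSSdet : IsUnit (Sᵀ * S).det := (Matrix.isUnit_iff_isUnit_det _).mp hSS.isUnit
  have hKdet : IsUnit (Sᵀ * W⁻¹ * S).det := (Matrix.isUnit_iff_isUnit_det _).mp hKpd.isUnit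
  have hWdet : IsUnit W.det := (Matrix.isUnit_iff_isUnit_det _).mp hW.isUnit
  have c1 : ∀ (X : Matrix (Fin m) (Fin m) ℝ), W⁻¹ * (W * X) = X := fun X => by
    rw [← Matrix.mul_assoc, Matrix.nonsing_inv_mul _ hWdet, Matrix.one_mul]
  have c2 : ∀ (X : Matrix (Fin m) (Fin m) ℝ), W * (W⁻¹ * X) = X := fun X => by
    rw [← Matrix.mul_assoc, Matrix.mul_nonsing_inv _ hWdet, Matrix.one_mul]
  have c3 : ∀ (X : Matrix (Fin n) (Fin m) ℝ), (Sᵀ * S)⁻¹ * (Sᵀ * (S * X)) = X := fun X => by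
    rw [show (Sᵀ * S)⁻¹ * (Sᵀ * (S * X)) = (Sᵀ * S)⁻¹ * (Sᵀ * S) * X by
      simp [Matrix.mul_assoc], Matrix.nonsing_inv_mul _ hSSdet, Matrix.one_mul]
  have c4 : ∀ (X : Matrix (Fin n) (Fin m) ℝ), Sᵀ * (S * ((Sᵀ * S)⁻¹ * X)) = X := fun X => by
    rw [show Sᵀ * (S * ((Sᵀ * S)⁻¹ * X)) = (Sᵀ * S) * (Sᵀ * S)⁻¹ * X by
      simp [Matrix.mul_assoc], Matrix.mul_nonsing_inv _ hSSdet, Matrix.one_mul]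
  have c5 : ∀ (X : Matrix (Fin n) (Fin m) ℝ), K * (Sᵀ * (W⁻¹ * (S * X))) = X := fun X => by
    rw [show K * (Sᵀ * (W⁻¹ * (S * X))) = (Sᵀ * W⁻¹ * S)⁻¹ * (Sᵀ * W⁻¹ * S) * X by
      simp [hKdef, Matrix.mul_assoc], Matrix.nonsing_inv_mul _ hKdet, Matrix.one_mul]
  -- transposes
  have ht1 : ((Sᵀ * S)⁻¹)ᵀ = (Sᵀ * S)⁻¹ := by
    rw [Matrix.transpose_nonsing_inv, Matrix.transpose_mul, Matrix.transpose_transpose]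
  have hWt : Wᵀ = W := by
    have := hW.isHermitian
    exact (by simpa [Matrix.conjTranspose_eq_transpose_of_trivial] using this : W.IsSymm).eq
  have ht3 : (W⁻¹)ᵀ = W⁻¹ := by rw [Matrix.transpose_nonsing_inv, hWt]
  have ht2 : Kᵀ = K := by
    simp [hKdef, Matrix.transpose_nonsing_inv, Matrix.transpose_mul, ht3, Matrix.mul_assoc]
  -- the key factorization
  set A : Matrix (Fin m) (Fin m) ℝ :=
    S * (Sᵀ * S)⁻¹ * Sᵀ - S * K * Sᵀ * W⁻¹ with hAdef
  have key : S * (Sᵀ * S)⁻¹ * Sᵀ * W * S * (Sᵀ * S)⁻¹ * Sᵀ - S * K * Sᵀ = A * W * Aᵀ := by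
    rw [hAdef]
    simp only [Matrix.transpose_sub, Matrix.transpose_mul, Matrix.transpose_transpose,
      ht1, ht2, ht3]
    simp only [Matrix.mul_sub, Matrix.sub_mul, Matrix.mul_assoc, c1, c2, c3, c4, c5]
    abel
  rw [hKdef] at key
  rw [key]
  have := hW.posSemidef.mul_mul_conjTranspose_same A
  simpa [Matrix.conjTranspose_eq_transpose_of_trivial] using this
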